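/- Let \mu be a finite Borel measure on \mathbb{R} with all moments finite. For Borel sets \partial define \mu_n(\partial) := \int_\partial (1+x^2)^n d\mu(x). If the polynomials are dense in L_2(\mathbb{R}, \mu_{n+1}) then the polynomials are dense in L_2(\mathbb{R}, \mu_n); consequently the set \{n : \text{polynomials dense in } L_2(\mathbb{R},\mu_n)\} is downward closed and the index of determinacy is well defined as its supremum. -/

import Mathlib

/-!
Since `(1 + x²)ⁿ ≤ (1 + x²)ⁿ⁺¹`, the norm of `L₂(μₙ₊₁)` dominates that of `L₂(μₙ)`, so polynomial
approximants in `L₂(μₙ₊₁)` are approximants in `L₂(μₙ)` as well. It remains to see that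
`L₂(μₙ) ∩ L₂(μₙ₊₁)` is dense in `L₂(μₙ)`: the truncations of `f ∈ L₂(μₙ)` to `[-k, k]` converge to
`f`, and on `[-k, k]` the extra weight `1 + x²` is bounded by `1 + k²`.
-/

open MeasureTheory Polynomial

/-- The (real) polynomials are dense in `L₂(ℝ, μ)`. -/
def PolyDense (μ : Measure ℝ) : Prop :=
  Dense {f : Lp ℝ 2 μ | ∃ p : Polynomial ℝ, (f : ℝ → ℝ) =ᵐ[μ] fun t : ℝ => p.eval t}

/-- The measure `μ_n(∂) = ∫_∂ (1+x²)ⁿ dμ`. -/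
noncomputable def weightPow (μ : Measure ℝ) (n : ℕ) : Measure ℝ :=
  μ.withDensity fun x => ENNReal.ofReal ((1 + x ^ 2) ^ n)

open Filter Topology Set
open scoped ENNReal

section WithDensity

variable {α E : Type*} [MeasurableSpace α] [NormedAddCommGroup E] {p : ℝ≥0∞} {μ : Measure α}

theorem MeasureTheory.MemLp.tendsto_eLpNorm_indicator_compl {f : α → E} (hp : p ≠ ∞)
    (hf : MemLp f p μ) {s : ℕ → Set α} (hs : ∀ n, MeasurableSet (s n)) (hmono : Monotone s)
    (hcover : ⋃ n, s n = univ) :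
    Tendsto (fun n => eLpNorm ((s n)ᶜ.indicator f) p μ) atTop (𝓝 0) := by
  rcases eq_or_ne p 0 with rfl | hp0
  · simp
  set ρ := μ.withDensity fun x => ‖f x‖ₑ ^ p.toReal
  have : IsFiniteMeasure ρ :=
    isFiniteMeasure_withDensity (lintegral_rpow_enorm_lt_top_of_eLpNorm_lt_top hp0 hp hf.2).ne
  have htail : Tendsto (fun n => ρ (s n)ᶜ) atTop (𝓝 0) := by
    have := tendsto_measure_iInter_atTop (μ := ρ) (fun n => (hs n).compl.nullMeasurableSet)
      (fun m n h => compl_subset_compl.2 (hmono h)) ⟨0, measure_ne_top ρ _⟩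
    rwa [← compl_iUnion, hcover, compl_univ, measure_empty] at this
  have hroot : Tendsto (fun n => ρ (s n)ᶜ ^ (1 / p.toReal)) atTop (𝓝 0) := by
    have hpos : 0 < 1 / p.toReal := one_div_pos.2 (ENNReal.toReal_pos hp0 hp)
    simpa only [ENNReal.zero_rpow_of_pos hpos] using htail.ennrpow_const (1 / p.toReal)
  refine hroot.congr fun n => ?_
  rw [eLpNorm_indicator_eq_eLpNorm_restrict (hs n).compl,
    eLpNorm_eq_lintegral_rpow_enorm_toReal hp0 hp, withDensity_apply _ (hs n).compl]

theorem MeasureTheory.MemLp.indicator_withDensity {f : α → E} (hf : MemLp f p μ) {s : Set α}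
    (hs : MeasurableSet s) {w : α → ℝ≥0∞} {C : ℝ≥0∞} (hC : C ≠ ∞) (hw : ∀ x ∈ s, w x ≤ C) :
    MemLp (s.indicator f) p (μ.withDensity w) := by
  rw [memLp_indicator_iff_restrict hs, restrict_withDensity hs]
  refine (hf.restrict s).of_measure_le_smul hC ?_
  calc (μ.restrict s).withDensity w ≤ (μ.restrict s).withDensity fun _ => C :=
        withDensity_mono (ae_restrict_of_forall_mem hs hw)
    _ = C • μ.restrict s := withDensity_const C

theorem MeasureTheory.Measure.le_withDensity_of_one_le {w : α → ℝ≥0∞} (hw : ∀ x, 1 ≤ w x) :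
    μ ≤ μ.withDensity w := by
  have h := withDensity_mono (μ := μ) (f := 1) (Eventually.of_forall hw)
  rwa [withDensity_one] at h

end WithDensity

section LpRange

variable {α E ι : Type*} [MeasurableSpace α] [NormedAddCommGroup E] {p : ℝ≥0∞} [Fact (1 ≤ p)]
  {μ ν : Measure α}

theorem MeasureTheory.dense_memLp_withDensity (hp : p ≠ ∞) {w : α → ℝ≥0∞} {s : ℕ → Set α}
    (hs : ∀ n, MeasurableSet (s n)) (hmono : Monotone s) (hcover : ⋃ n, s n = univ)
    (hw : ∀ n, ∃ C ≠ ∞, ∀ x ∈ s n, w x ≤ C) :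
    Dense {f : Lp E p μ | MemLp f p (μ.withDensity w)} := by
  intro f
  have hf := Lp.memLp f
  have htrunc (n : ℕ) : MemLp ((s n).indicator f) p μ := hf.indicator (hs n)
  refine mem_closure_of_tendsto (f := fun n => (htrunc n).toLp _) (b := atTop) ?_
    (Eventually.of_forall fun n => ?_)
  · rw [Lp.tendsto_Lp_iff_tendsto_eLpNorm']
    refine (hf.tendsto_eLpNorm_indicator_compl hp hs hmono hcover).congr fun n => ?_
    rw [eLpNorm_congr_ae ((htrunc n).coeFn_toLp.sub EventuallyEq.rfl), ← eLpNorm_neg,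
      indicator_compl, neg_sub]
  · obtain ⟨C, hC, hCw⟩ := hw n
    exact (hf.indicator_withDensity (hs n) hC hCw).ae_eq
      ((withDensity_absolutelyContinuous μ w).ae_eq (htrunc n).coeFn_toLp).symm

def lpRange (g : ι → α → E) (p : ℝ≥0∞) (μ : Measure α) : Set (Lp E p μ) :=
  {f | ∃ i, (f : α → E) =ᵐ[μ] g i}

theorem mem_closure_lpRange_of_le {g : ι → α → E} (hle : μ ≤ ν) (hdense : Dense (lpRange g p ν))
    {f : Lp E p μ} (hf : MemLp f p ν) : f ∈ closure (lpRange g p μ) := by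
  refine EMetric.mem_closure_iff.2 fun ε hε => ?_
  obtain ⟨b, ⟨i, hbi⟩, hb⟩ := EMetric.mem_closure_iff.1 (hdense (hf.toLp f)) ε hε
  have hgν : MemLp (g i) p ν := (Lp.memLp b).ae_eq hbi
  have hgμ : MemLp (g i) p μ := hgν.mono_measure hle
  refine ⟨hgμ.toLp (g i), ⟨i, hgμ.coeFn_toLp⟩, ?_⟩
  have hb_eq : b = hgν.toLp (g i) := Lp.ext (hbi.trans hgν.coeFn_toLp.symm)
  calc edist f (hgμ.toLp (g i)) = eLpNorm (⇑f - g i) p μ := by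
        rw [← Lp.edist_toLp_toLp _ _ (Lp.memLp f) hgμ, Lp.toLp_coeFn]
    _ ≤ eLpNorm (⇑f - g i) p ν := eLpNorm_mono_measure _ hle
    _ = edist (hf.toLp f) b := by rw [hb_eq, Lp.edist_toLp_toLp]
    _ < ε := hb

theorem Dense.lpRange_of_le {g : ι → α → E} (hle : μ ≤ ν)
    (hμν : Dense {f : Lp E p μ | MemLp f p ν}) (h : Dense (lpRange g p ν)) :
    Dense (lpRange g p μ) :=
  dense_closure.1 (hμν.mono fun _ hf => mem_closure_lpRange_of_le hle h hf)

end LpRange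

theorem weightPow_succ (μ : Measure ℝ) (n : ℕ) :
    weightPow μ (n + 1) = (weightPow μ n).withDensity fun x => ENNReal.ofReal (1 + x ^ 2) := by
  rw [weightPow, weightPow, ← withDensity_mul _ (by fun_prop) (by fun_prop)]
  congr 1 with x
  rw [Pi.mul_apply, pow_succ, ENNReal.ofReal_mul (by positivity)]

theorem weightPow_le_succ (μ : Measure ℝ) (n : ℕ) : weightPow μ n ≤ weightPow μ (n + 1) := by
  rw [weightPow_succ]
  exact Measure.le_withDensity_of_one_le fun x => by simp [sq_nonneg x]

theorem dense_memLp_weightPow_succ (μ : Measure ℝ) (n : ℕ) :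
    Dense {f : Lp ℝ 2 (weightPow μ n) | MemLp f 2 (weightPow μ (n + 1))} := by
  rw [weightPow_succ]
  refine dense_memLp_withDensity ENNReal.ofNat_ne_top (s := fun k : ℕ => Metric.closedBall 0 k)
    (fun _ => Metric.isClosed_closedBall.measurableSet)
    (fun _ _ hkl => Metric.closedBall_subset_closedBall (by exact_mod_cast hkl))
    (Metric.iUnion_closedBall_nat 0) fun k =>
      ⟨ENNReal.ofReal (1 + k ^ 2), ENNReal.ofReal_ne_top, fun x hx => ?_⟩
  have hx : |x| ≤ k := by simpa using hx
  exact ENNReal.ofReal_le_ofReal (by nlinarith [abs_nonneg x, sq_abs x])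

-- `PolyDense ν` unfolds to `Dense (lpRange (fun q t => q.eval t) 2 ν)`.
theorem PolyDense.of_weightPow_succ {μ : Measure ℝ} {n : ℕ}
    (h : PolyDense (weightPow μ (n + 1))) : PolyDense (weightPow μ n) :=
  Dense.lpRange_of_le (g := fun q : ℝ[X] => fun t => q.eval t) (weightPow_le_succ μ n)
    (dense_memLp_weightPow_succ μ n) h

theorem stmt19_general (μ : Measure ℝ) :
    (∀ n : ℕ, PolyDense (weightPow μ (n + 1)) → PolyDense (weightPow μ n)) ∧
    ∀ m n : ℕ, m ≤ n → PolyDense (weightPow μ n) → PolyDense (weightPow μ m) :=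
  ⟨fun _ => PolyDense.of_weightPow_succ,
    fun _ _ hmn => antitone_nat_of_succ_le (f := fun n => PolyDense (weightPow μ n))
      (fun _ => PolyDense.of_weightPow_succ) hmn⟩

/-- Let `μ` be a finite Borel measure with all moments finite and
`μ_n(∂) = ∫_∂ (1+x²)ⁿ dμ`.  If the polynomials are dense in `L₂(ℝ, μ_{n+1})`, then
they are dense in `L₂(ℝ, μ_n)`; consequently the set
`{n : polynomials dense in L₂(ℝ, μ_n)}` is downward closed (so the index of
determinacy is well defined as its supremum). -/
theorem stmt19 (μ : Measure ℝ) [IsFiniteMeasure μ]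
    (hmom : ∀ k : ℕ, Integrable (fun x : ℝ => x ^ k) μ) :
    (∀ n : ℕ, PolyDense (weightPow μ (n + 1)) → PolyDense (weightPow μ n)) ∧
    ∀ m n : ℕ, m ≤ n → PolyDense (weightPow μ n) → PolyDense (weightPow μ m) :=
  stmt19_general μ
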